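/- arXiv:math/0509291 — 2 statements merged into one kernel-verified Lean document; each statement's English description precedes it below -/
import Mathlib

section
/- Let $(G,H)$ be a discrete Hecke pair. If $(\nu, V)$ is a covariant pair, then the operators $\upsilon_{xH,yH} = \nu(\epsilon_{xH}) V([Hx^{-1}yH]) \nu(\epsilon_{yH})$ satisfy $\upsilon_{xH,yH}\,\upsilon_{yH,zH} = \upsilon_{xH,zH}$ for all $x,y,z \in G$; i.e., every covariant pair is a matrix unit pair. -/
/-!
Write `υ_{x,y} = ν(xH) V(x⁻¹y) ν(yH)`. Since `ν(yH)` is idempotent, `υ_{x,y} υ_{y,z}` is the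
covariance relation for `V(x⁻¹y) ν(yH) V(y⁻¹z)` compressed by `ν(xH)` on the left and `ν(zH)`
on the right. The `ν(cH)` are orthogonal projections, so of the finitely many terms
`ν(yuH) V(u⁻¹v) ν(yvH)` only the one with `yuH = xH`, `yvH = zH` survives, and it is
`ν(xH) V(x⁻¹z) ν(zH)` because `V` is constant on double cosets.
-/

open scoped Classical Pointwise

variable {G : Type*} [Group G]

/-- The double coset `HaH`. -/
def dcos (H : Subgroup G) (a : G) : Set G := DoubleCoset.doubleCoset a (H : Set G) (H : Set G)

/-- The set of left cosets of `H` contained in `HaH`, as a subset of `G ⧸ H`. -/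
def leftCosetsIn (H : Subgroup G) (a : G) : Set (G ⧸ H) := QuotientGroup.mk '' dcos H a

/-- The set of right cosets of `H` contained in `HaH`. -/
def rightCosetsIn (H : Subgroup G) (a : G) :
    Set (Quotient (QuotientGroup.rightRel H)) :=
  (fun g => Quotient.mk (QuotientGroup.rightRel H) g) '' dcos H a

/-- The right-coset counting map `R(a) = |H\HaH|`. -/
noncomputable def Rcount (H : Subgroup G) (a : G) : ℕ := Nat.card (rightCosetsIn H a)

/-- `(G,H)` is a (discrete) Hecke pair: every double coset contains finitely many
left cosets. -/
def IsHeckePair (H : Subgroup G) : Prop := ∀ a : G, (leftCosetsIn H a).Finite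

variable {E : Type*} [NormedAddCommGroup E] [InnerProductSpace ℂ E] [CompleteSpace E]

section MatrixUnits

open QuotientGroup

lemma mul_mem_dcos_of_mem {H : Subgroup G} {a g : G} (hg : g ∈ dcos H a) {h : G} (hh : h ∈ H) :
    g * h ∈ dcos H a := by
  obtain ⟨h₁, hh₁, h₂, hh₂, rfl⟩ := DoubleCoset.mem_doubleCoset.mp hg
  exact DoubleCoset.mem_doubleCoset.mpr ⟨h₁, hh₁, h₂ * h, H.mul_mem hh₂ hh, by group⟩

lemma out_mk_mem_dcos {H : Subgroup G} {a g : G} (hg : g ∈ dcos H a) :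
    Quotient.out (mk g : G ⧸ H) ∈ dcos H a := by
  obtain ⟨h, hout⟩ := mk_out_eq_mul H g
  exact hout ▸ mul_mem_dcos_of_mem hg h.2

lemma mk_mul_out (H : Subgroup G) (x : G) (q : G ⧸ H) :
    (mk (x * Quotient.out q) : G ⧸ H) = x • q := by
  rw [← smul_eq_mul, ← MulAction.Quotient.smul_mk, out_eq']

lemma OrthogonalIdempotents.mul_mul_mul_eq_ite {R ι : Type*} [Semiring R] {e : ι → R}
    (he : OrthogonalIdempotents e) (A : R) (i i' j j' : ι) :
    e i * (e i' * A * e j') * e j = if i' = i ∧ j' = j then e i * A * e j else 0 := by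
  calc e i * (e i' * A * e j') * e j = e i * e i' * A * (e j' * e j) := by simp only [mul_assoc]
    _ = _ := by
      rw [he.mul_eq, he.mul_eq]
      by_cases hi : i' = i <;> by_cases hj : j' = j <;> simp [hi, hj, Ne.symm]

variable {R : Type*} [Semiring R] {H : Subgroup G}

noncomputable def covariantSummand (ν : G ⧸ H → R) (V : G → R) (a x b : G)
    (p : (G ⧸ H) × (G ⧸ H)) : R :=
  if Quotient.out p.1 ∈ dcos H a⁻¹ ∧ Quotient.out p.2 ∈ dcos H b then
    ν (mk (x * Quotient.out p.1)) * V ((Quotient.out p.1)⁻¹ * Quotient.out p.2) *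
      ν (mk (x * Quotient.out p.2))
  else 0

def IsCovariantPair (ν : G ⧸ H → R) (V : G → R) : Prop :=
  ∀ a x b : G, V a * ν (mk x) * V b = ∑ᶠ p, covariantSummand ν V a x b p

def matrixUnit (ν : G ⧸ H → R) (V : G → R) (x y : G) : R :=
  ν (mk x) * V (x⁻¹ * y) * ν (mk y)

variable {ν : G ⧸ H → R} {V : G → R}

lemma covariantSummand_support_finite (hHecke : IsHeckePair H) (a x b : G) :
    (Function.support (covariantSummand ν V a x b)).Finite := by
  refine ((hHecke a⁻¹).prod (hHecke b)).subset fun p hp => ?_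
  rw [Function.mem_support, covariantSummand] at hp
  split_ifs at hp with h
  · exact ⟨⟨_, h.1, out_eq' p.1⟩, ⟨_, h.2, out_eq' p.2⟩⟩
  · exact absurd rfl hp

lemma mul_covariantSummand_mul_of_ne (hν : OrthogonalIdempotents ν) {a x b c d : G}
    {p : (G ⧸ H) × (G ⧸ H)} (hp : p ≠ (mk (x⁻¹ * c), mk (x⁻¹ * d))) :
    ν (mk c) * covariantSummand ν V a x b p * ν (mk d) = 0 := by
  unfold covariantSummand
  split_ifs
  · rw [hν.mul_mul_mul_eq_ite, if_neg]
    rintro ⟨h₁, h₂⟩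
    rw [mk_mul_out] at h₁ h₂
    exact hp (Prod.ext (eq_inv_smul_iff.mpr h₁) (eq_inv_smul_iff.mpr h₂))
  · rw [mul_zero, zero_mul]

lemma mul_covariantSummand_mul_self (hν : OrthogonalIdempotents ν)
    (hV : ∀ a b : G, b ∈ dcos H a → V b = V a) {a x b c d : G}
    (hc : x⁻¹ * c ∈ dcos H a⁻¹) (hd : x⁻¹ * d ∈ dcos H b) :
    ν (mk c) * covariantSummand ν V a x b (mk (x⁻¹ * c), mk (x⁻¹ * d)) * ν (mk d) =
      matrixUnit ν V c d := by
  obtain ⟨⟨h₁, hh₁⟩, hu⟩ := mk_out_eq_mul H (x⁻¹ * c)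
  obtain ⟨⟨h₂, hh₂⟩, hv⟩ := mk_out_eq_mul H (x⁻¹ * d)
  have hV_out : V ((Quotient.out (mk (x⁻¹ * c) : G ⧸ H))⁻¹ * Quotient.out (mk (x⁻¹ * d) : G ⧸ H))
      = V (c⁻¹ * d) :=
    hV _ _ (DoubleCoset.mem_doubleCoset.mpr ⟨h₁⁻¹, H.inv_mem hh₁, h₂, hh₂, by rw [hu, hv]; group⟩)
  rw [covariantSummand, if_pos ⟨out_mk_mem_dcos hc, out_mk_mem_dcos hd⟩, mk_mul_out, mk_mul_out,
    MulAction.Quotient.smul_mk, MulAction.Quotient.smul_mk, smul_eq_mul, smul_eq_mul,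
    mul_inv_cancel_left, mul_inv_cancel_left, hV_out, hν.mul_mul_mul_eq_ite, if_pos ⟨rfl, rfl⟩]
  rfl

theorem IsCovariantPair.matrixUnit_mul_matrixUnit (hcov : IsCovariantPair ν V)
    (hHecke : IsHeckePair H) (hν : OrthogonalIdempotents ν)
    (hV : ∀ a b : G, b ∈ dcos H a → V b = V a) (x y z : G) :
    matrixUnit ν V x y * matrixUnit ν V y z = matrixUnit ν V x z := by
  have hfin := covariantSummand_support_finite (ν := ν) (V := V) hHecke (x⁻¹ * y) y (y⁻¹ * z)
  have hyx : y⁻¹ * x ∈ dcos H (x⁻¹ * y)⁻¹ := by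
    rw [mul_inv_rev, inv_inv]
    exact DoubleCoset.mem_doubleCoset_self H H _
  calc matrixUnit ν V x y * matrixUnit ν V y z
      = ν (mk x) * (V (x⁻¹ * y) * ν (mk y) * V (y⁻¹ * z)) * ν (mk z) := by
        simp only [matrixUnit, mul_assoc, ← mul_assoc (ν (mk y)) (ν (mk y)), (hν.idem _).eq]
    _ = ∑ᶠ p, ν (mk x) * covariantSummand ν V (x⁻¹ * y) y (y⁻¹ * z) p * ν (mk z) := by
        rw [hcov, mul_finsum' _ _ hfin,
          finsum_mul' _ _ (hfin.subset (Function.support_mul_subset_right _ _))]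
    _ = ν (mk x) * covariantSummand ν V (x⁻¹ * y) y (y⁻¹ * z)
          (mk (y⁻¹ * x), mk (y⁻¹ * z)) * ν (mk z) :=
        finsum_eq_single _ _ fun _ hp => mul_covariantSummand_mul_of_ne hν hp
    _ = matrixUnit ν V x z :=
        mul_covariantSummand_mul_self hν hV hyx (DoubleCoset.mem_doubleCoset_self H H _)

lemma star_matrixUnit [StarRing R] (hν : ∀ c, IsSelfAdjoint (ν c))
    (hV : ∀ a : G, star (V a) = V a⁻¹) (x y : G) :
    star (matrixUnit ν V x y) = matrixUnit ν V y x := by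
  rw [matrixUnit, star_mul, star_mul, (hν _).star_eq, (hν _).star_eq, hV, mul_inv_rev, inv_inv,
    ← mul_assoc]
  rfl

lemma matrixUnit_eq_of_mk_eq (hV : ∀ a b : G, b ∈ dcos H a → V b = V a) {x x' y y' : G}
    (hx : (mk x : G ⧸ H) = mk x') (hy : (mk y : G ⧸ H) = mk y') :
    matrixUnit ν V x y = matrixUnit ν V x' y' := by
  have hx' : x⁻¹ * x' ∈ H := QuotientGroup.eq.mp hx
  have hy' : y'⁻¹ * y ∈ H := QuotientGroup.eq.mp hy.symm
  rw [matrixUnit, matrixUnit, hx, hy,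
    hV (x'⁻¹ * y') (x⁻¹ * y) (DoubleCoset.mem_doubleCoset.mpr ⟨_, hx', _, hy', by group⟩)]

lemma matrixUnit_mul_matrixUnit_of_ne (hν : OrthogonalIdempotents ν) {x y w z : G}
    (h : (mk y : G ⧸ H) ≠ mk w) :
    matrixUnit ν V x y * matrixUnit ν V w z = 0 :=
  calc matrixUnit ν V x y * matrixUnit ν V w z
      = ν (mk x) * V (x⁻¹ * y) * (ν (mk y) * ν (mk w)) * (V (w⁻¹ * z) * ν (mk z)) := by
        simp only [matrixUnit, mul_assoc]
    _ = 0 := by rw [hν.ortho h, mul_zero, zero_mul]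

end MatrixUnits

theorem stmt9_general (H : Subgroup G) (hHecke : IsHeckePair H)
    (ν : G ⧸ H → E →L[ℂ] E) (V : G → E →L[ℂ] E)
    (hν_sa : ∀ c, IsSelfAdjoint (ν c)) (hν_idem : ∀ c, ν c * ν c = ν c)
    (hν_orth : ∀ c d, c ≠ d → ν c * ν d = 0)
    (hV_class : ∀ a b : G, b ∈ dcos H a → V b = V a)
    (hV_star : ∀ a : G, star (V a) = V a⁻¹)
    -- `(ν, V)` is a covariant pair:
    (hcov : ∀ a x b : G,
      V a * ν (QuotientGroup.mk x) * V b =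
        ∑ᶠ p : (G ⧸ H) × (G ⧸ H),
          if Quotient.out p.1 ∈ dcos H a⁻¹ ∧ Quotient.out p.2 ∈ dcos H b then
            ν (QuotientGroup.mk (x * Quotient.out p.1)) *
              V ((Quotient.out p.1)⁻¹ * Quotient.out p.2) *
              ν (QuotientGroup.mk (x * Quotient.out p.2))
          else 0) :
    (∀ x y z : G,
      (ν (QuotientGroup.mk x) * V (x⁻¹ * y) * ν (QuotientGroup.mk y)) *
          (ν (QuotientGroup.mk y) * V (y⁻¹ * z) * ν (QuotientGroup.mk z)) =
        ν (QuotientGroup.mk x) * V (x⁻¹ * z) * ν (QuotientGroup.mk z)) ∧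
    (∀ x y : G,
      star (ν (QuotientGroup.mk x) * V (x⁻¹ * y) * ν (QuotientGroup.mk y)) =
        ν (QuotientGroup.mk y) * V (y⁻¹ * x) * ν (QuotientGroup.mk x)) ∧
    (∀ x y w z : G,
      (ν (QuotientGroup.mk x) * V (x⁻¹ * y) * ν (QuotientGroup.mk y)) *
          (ν (QuotientGroup.mk w) * V (w⁻¹ * z) * ν (QuotientGroup.mk z)) =
        if (QuotientGroup.mk w : G ⧸ H) = QuotientGroup.mk y then
          ν (QuotientGroup.mk x) * V (x⁻¹ * z) * ν (QuotientGroup.mk z)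
        else 0) := by
  have hν : OrthogonalIdempotents ν := ⟨hν_idem, hν_orth⟩
  have hcov' : IsCovariantPair ν V := hcov
  have hmul := hcov'.matrixUnit_mul_matrixUnit hHecke hν hV_class
  refine ⟨hmul, star_matrixUnit hν_sa hV_star, fun x y w z => ?_⟩
  split_ifs with hw
  · change matrixUnit ν V x y * matrixUnit ν V w z = matrixUnit ν V x z
    rw [matrixUnit_eq_of_mk_eq hV_class hw rfl, hmul]
  · exact matrixUnit_mul_matrixUnit_of_ne hν (Ne.symm hw)

/-- If `(ν, V)` is a covariant pair for the discrete Hecke pair `(G,H)`, then the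
operators `υ_{xH,yH} = ν(ε_{xH}) V([Hx⁻¹yH]) ν(ε_{yH})` satisfy
`υ_{xH,yH} υ_{yH,zH} = υ_{xH,zH}`; i.e. every covariant pair is a matrix unit pair. -/
theorem stmt9 (H : Subgroup G) (hHecke : IsHeckePair H)
    (ν : G ⧸ H → E →L[ℂ] E) (V : G → E →L[ℂ] E)
    (hν_sa : ∀ c, IsSelfAdjoint (ν c)) (hν_idem : ∀ c, ν c * ν c = ν c)
    (hν_orth : ∀ c d, c ≠ d → ν c * ν d = 0)
    (hν_nd : (⨆ c : G ⧸ H, LinearMap.range (ν c : E →ₗ[ℂ] E)).topologicalClosure = ⊤)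
    (hV_class : ∀ a b : G, b ∈ dcos H a → V b = V a)
    (hV_one : V 1 = 1) (hV_star : ∀ a : G, star (V a) = V a⁻¹)
    (hV_mul : ∀ a b : G, V a * V b =
      ∑ᶠ c : DoubleCoset.Quotient (H : Set G) (H : Set G),
        (Nat.card ↥{d : G ⧸ H | Quotient.out d ∈ dcos H a ∧
            (Quotient.out d)⁻¹ * Quotient.out c ∈ dcos H b} : ℂ) • V (Quotient.out c))
    -- `(ν, V)` is a covariant pair:
    (hcov : ∀ a x b : G,
      V a * ν (QuotientGroup.mk x) * V b =
        ∑ᶠ p : (G ⧸ H) × (G ⧸ H),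
          if Quotient.out p.1 ∈ dcos H a⁻¹ ∧ Quotient.out p.2 ∈ dcos H b then
            ν (QuotientGroup.mk (x * Quotient.out p.1)) *
              V ((Quotient.out p.1)⁻¹ * Quotient.out p.2) *
              ν (QuotientGroup.mk (x * Quotient.out p.2))
          else 0) :
    (∀ x y z : G,
      (ν (QuotientGroup.mk x) * V (x⁻¹ * y) * ν (QuotientGroup.mk y)) *
          (ν (QuotientGroup.mk y) * V (y⁻¹ * z) * ν (QuotientGroup.mk z)) =
        ν (QuotientGroup.mk x) * V (x⁻¹ * z) * ν (QuotientGroup.mk z)) ∧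
    (∀ x y : G,
      star (ν (QuotientGroup.mk x) * V (x⁻¹ * y) * ν (QuotientGroup.mk y)) =
        ν (QuotientGroup.mk y) * V (y⁻¹ * x) * ν (QuotientGroup.mk x)) ∧
    (∀ x y w z : G,
      (ν (QuotientGroup.mk x) * V (x⁻¹ * y) * ν (QuotientGroup.mk y)) *
          (ν (QuotientGroup.mk w) * V (w⁻¹ * z) * ν (QuotientGroup.mk z)) =
        if (QuotientGroup.mk w : G ⧸ H) = QuotientGroup.mk y then
          ν (QuotientGroup.mk x) * V (x⁻¹ * z) * ν (QuotientGroup.mk z)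
        else 0) :=
  stmt9_general H hHecke ν V hν_sa hν_idem hν_orth hV_class hV_star hcov
end

section
/- Let $(G,H)$ be a discrete Hecke pair. The pair $(M, \rho)$ of representations on $\ell^2(G/H)$ (multiplication and right convolution) is a covariant pair: for all $a, x, b \in G$, $\rho([HaH]) M(\epsilon_{xH}) \rho([HbH]) = \sum_{uH \subseteq Ha^{-1}H,\ vH \subseteq HbH} M(\epsilon_{xuH}) \rho([Hu^{-1}vH]) M(\epsilon_{xvH})$. -/
/-!
All operators are compared on the basis vectors `ε_d` of `ℓ²(G/H)`. Write `A_c` for the finite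
set of left cosets contained in `HcH`. Since `A_c` is stable under left multiplication by `H`,
`ρ(c) ε_{gH} = ∑_{u ∈ A_{c⁻¹}} ε_{g u}` for every representative `g`. Hence the left-hand side
sends `ε_d` to `[x⁻¹d ∈ A_b] ∑_{u ∈ A_{a⁻¹}} ε_{xu}`. In the `(u, v)` term of the right-hand
side, `M(ε_{xvH})` keeps only `d = xvH`, and then `M(ε_{xuH})` picks out of `ρ(u⁻¹v) ε_{xvH}` the
single coset `v⁻¹uH`, which lies in `A_{v⁻¹u}`; so that term sends `ε_d` to `[d = xvH] ε_{xu}`,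
and summing over `v ∈ A_b` recovers the left-hand side.
-/

open scoped Classical Pointwise

variable {G : Type*} [Group G]

open scoped ENNReal lp

theorem finsum_ite_eq_finsetSum {α M : Type*} [AddCommMonoid M] {P : α → Prop} [DecidablePred P]
    {s : Finset α} (hs : ∀ a, P a ↔ a ∈ s) (f : α → M) :
    ∑ᶠ a, (if P a then f a else 0) = ∑ a ∈ s, f a := by
  rw [finsum_eq_finsetSum_of_support_subset _
    fun a ha => (hs a).1 (by_contra fun h => ha (if_neg h))]
  exact Finset.sum_congr rfl fun a ha => if_pos ((hs a).2 ha)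

section lpSingle

variable {ι 𝕜 F : Type*} [DecidableEq ι] [NormedField 𝕜] [NormedAddCommGroup F] [NormedSpace 𝕜 F]
  {p : ℝ≥0∞} [Fact (1 ≤ p)]

theorem lp.continuousLinearMap_ext_single (hp : p ≠ ⊤) {T S : lp (fun _ : ι => 𝕜) p →L[𝕜] F}
    (h : ∀ i, T (lp.single p i 1) = S (lp.single p i 1)) : T = S := by
  ext f
  have hs := lp.hasSum_single hp f
  have hsingle : ∀ i, lp.single p i (f i) = f i • lp.single (E := fun _ => 𝕜) p i 1 := fun i => by
    rw [← lp.single_smul, smul_eq_mul, mul_one]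
  simp only [hsingle] at hs
  exact (T.hasSum hs).unique (by simpa only [map_smul, h] using S.hasSum hs)

theorem lp.apply_sum_single_smul_of_diagonal {α : Type*} [Group α] [MulAction α ι]
    {M : lp (fun _ : ι => 𝕜) p →L[𝕜] lp (fun _ : ι => 𝕜) p} {c : ι}
    (hM : ∀ d, M (lp.single p d 1) = if d = c then lp.single p d 1 else 0)
    (g : α) (s : Finset ι) :
    M (∑ w ∈ s, lp.single p (g • w) 1) = if g⁻¹ • c ∈ s then lp.single p c 1 else 0 := by
  rw [map_sum, ← Finset.sum_ite_eq' s (g⁻¹ • c) fun _ => lp.single p c 1]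
  refine Finset.sum_congr rfl fun w _ => ?_
  simp only [hM, eq_inv_smul_iff]
  split_ifs with h <;> simp [h]

end lpSingle

theorem QuotientGroup.mk_mul_out {H : Subgroup G} (g : G) (u : G ⧸ H) :
    ((g * u.out : G) : G ⧸ H) = g • u :=
  MulAction.Quotient.mk_smul_out H g u

section Cosets

variable {H : Subgroup G} {c g h : G}

theorem mem_dcos_iff : g ∈ dcos H c ↔ ∃ h₁ ∈ H, ∃ h₂ ∈ H, g = h₁ * c * h₂ := by
  simp [dcos, DoubleCoset.mem_doubleCoset]

theorem mul_mul_mem_dcos {h₁ h₂ : G} (h₁H : h₁ ∈ H) (h₂H : h₂ ∈ H) (hg : g ∈ dcos H c) :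
    h₁ * g * h₂ ∈ dcos H c := by
  obtain ⟨k₁, hk₁, k₂, hk₂, rfl⟩ := mem_dcos_iff.1 hg
  exact mem_dcos_iff.2 ⟨h₁ * k₁, H.mul_mem h₁H hk₁, k₂ * h₂, H.mul_mem hk₂ h₂H, by group⟩

theorem inv_mem_dcos_inv_iff : g⁻¹ ∈ dcos H c⁻¹ ↔ g ∈ dcos H c := by
  simp only [mem_dcos_iff]
  constructor <;> rintro ⟨h₁, hh₁, h₂, hh₂, hg⟩
  · exact ⟨h₂⁻¹, H.inv_mem hh₂, h₁⁻¹, H.inv_mem hh₁, by rw [← inv_inv g, hg]; group⟩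
  · exact ⟨h₂⁻¹, H.inv_mem hh₂, h₁⁻¹, H.inv_mem hh₁, by rw [hg]; group⟩

theorem mk_mem_leftCosetsIn_iff : (g : G ⧸ H) ∈ leftCosetsIn H c ↔ g ∈ dcos H c := by
  refine ⟨fun ⟨k, hk, hkg⟩ => ?_, fun hg => ⟨g, hg, rfl⟩⟩
  rw [← mul_inv_cancel_left k g]
  simpa using mul_mul_mem_dcos H.one_mem (QuotientGroup.eq.1 hkg) hk

theorem out_mem_dcos_iff {u : G ⧸ H} : u.out ∈ dcos H c ↔ u ∈ leftCosetsIn H c := by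
  rw [← mk_mem_leftCosetsIn_iff, QuotientGroup.out_eq']

theorem smul_mem_leftCosetsIn_iff (hh : h ∈ H) {u : G ⧸ H} :
    h • u ∈ leftCosetsIn H c ↔ u ∈ leftCosetsIn H c := by
  induction u using QuotientGroup.induction_on with | H k => ?_
  rw [MulAction.Quotient.smul_mk, smul_eq_mul, mk_mem_leftCosetsIn_iff, mk_mem_leftCosetsIn_iff]
  refine ⟨fun hk => ?_, fun hk => by simpa using mul_mul_mem_dcos hh H.one_mem hk⟩
  simpa using mul_mul_mem_dcos (H.inv_mem hh) H.one_mem hk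

theorem inv_smul_mk_mem_leftCosetsIn_inv_iff {k : G} :
    g⁻¹ • (k : G ⧸ H) ∈ leftCosetsIn H c⁻¹ ↔ k⁻¹ • (g : G ⧸ H) ∈ leftCosetsIn H c := by
  simp only [MulAction.Quotient.smul_coe, smul_eq_mul, mk_mem_leftCosetsIn_iff]
  rw [← inv_mem_dcos_inv_iff (g := k⁻¹ * g), mul_inv_rev, inv_inv]

end Cosets

section Operators

variable {H : Subgroup G} (hHecke : IsHeckePair H)
  {Mop : G ⧸ H → ℓ²(G ⧸ H, ℂ) →L[ℂ] ℓ²(G ⧸ H, ℂ)} {ρop : G → ℓ²(G ⧸ H, ℂ) →L[ℂ] ℓ²(G ⧸ H, ℂ)}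
  (hM : ∀ c d : G ⧸ H, Mop c (lp.single 2 d 1) = if d = c then lp.single 2 d 1 else 0)
  (hρ : ∀ (a : G) (d : G ⧸ H), ρop a (lp.single 2 d 1) =
    ∑ᶠ u : G ⧸ H, if u.out ∈ dcos H a⁻¹ then lp.single 2 (QuotientGroup.mk (d.out * u.out)) 1
      else 0)
include hHecke hρ

theorem rho_apply_single_mk (c g : G) :
    ρop c (lp.single 2 (g : G ⧸ H) 1) = ∑ u ∈ (hHecke c⁻¹).toFinset, lp.single 2 (g • u) 1 := by
  obtain ⟨⟨h, hh⟩, hout⟩ := QuotientGroup.mk_out_eq_mul H g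
  rw [hρ, finsum_ite_eq_finsetSum (s := (hHecke c⁻¹).toFinset)
    fun u => by rw [out_mem_dcos_iff, Set.Finite.mem_toFinset]]
  simp only [QuotientGroup.mk_mul_out, hout, mul_smul]
  exact Finset.sum_equiv (MulAction.toPerm h)
    (fun u => by simp [smul_mem_leftCosetsIn_iff hh]) fun _ _ => rfl

include hM

theorem mul_rho_apply_single (x b : G) (d : G ⧸ H) :
    (Mop x * ρop b) (lp.single 2 d 1) =
      if x⁻¹ • d ∈ leftCosetsIn H b then lp.single 2 (x : G ⧸ H) 1 else 0 := by
  induction d using QuotientGroup.induction_on with | H k => ?_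
  simp only [mul_apply_eq_comp, rho_apply_single_mk hHecke hρ,
    lp.apply_sum_single_smul_of_diagonal (hM _), Set.Finite.mem_toFinset,
    inv_smul_mk_mem_leftCosetsIn_inv_iff]

theorem rho_mul_mul_rho_apply_single (a x b : G) (d : G ⧸ H) :
    (ρop a * Mop x * ρop b) (lp.single 2 d 1) =
      if x⁻¹ • d ∈ leftCosetsIn H b then ∑ u ∈ (hHecke a⁻¹).toFinset, lp.single 2 (x • u) 1
      else 0 := by
  rw [mul_assoc, mul_apply_eq_comp, mul_rho_apply_single hHecke hM hρ, apply_ite (ρop a),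
    map_zero, rho_apply_single_mk hHecke hρ]

theorem covariance_term_apply_single (x : G) (u v d : G ⧸ H) :
    (Mop (x * u.out : G) * ρop (u.out⁻¹ * v.out) * Mop (x * v.out : G)) (lp.single 2 d 1) =
      if d = x • v then lp.single 2 (x • u) 1 else 0 := by
  simp only [QuotientGroup.mk_mul_out, mul_apply_eq_comp, hM]
  split_ifs with hd
  · rw [hd, ← QuotientGroup.mk_mul_out x v, rho_apply_single_mk hHecke hρ,
      lp.apply_sum_single_smul_of_diagonal (hM _)]
    have hmem : (x * v.out)⁻¹ • x • u ∈ leftCosetsIn H (u.out⁻¹ * v.out)⁻¹ := by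
      rw [smul_smul, mul_inv_rev, mul_inv_rev, inv_inv, inv_mul_cancel_right,
        ← QuotientGroup.mk_mul_out, mk_mem_leftCosetsIn_iff]
      exact DoubleCoset.mem_doubleCoset_self H H _
    rw [if_pos ((Set.Finite.mem_toFinset _).2 hmem)]
  · simp

end Operators

/-- For a discrete Hecke pair `(G,H)`, the pair `(M, ρ)` of multiplication and
right-convolution representations on `ℓ²(G/H)` is a covariant pair:
`ρ([HaH]) M(ε_{xH}) ρ([HbH]) = ∑_{uH ⊆ Ha⁻¹H, vH ⊆ HbH} M(ε_{xuH}) ρ([Hu⁻¹vH]) M(ε_{xvH})`. -/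
theorem stmt12 (H : Subgroup G) (hHecke : IsHeckePair H)
    (Mop : G ⧸ H → lp (fun _ : G ⧸ H => ℂ) 2 →L[ℂ] lp (fun _ : G ⧸ H => ℂ) 2)
    (ρop : G → lp (fun _ : G ⧸ H => ℂ) 2 →L[ℂ] lp (fun _ : G ⧸ H => ℂ) 2)
    (hM : ∀ c d : G ⧸ H,
      Mop c (lp.single 2 d 1) = if d = c then lp.single 2 d 1 else 0)
    (hρ : ∀ (a : G) (d : G ⧸ H),
      ρop a (lp.single 2 d 1) =
        ∑ᶠ u : G ⧸ H,
          if Quotient.out u ∈ dcos H a⁻¹ then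
            lp.single 2 (QuotientGroup.mk (Quotient.out d * Quotient.out u)) 1
          else 0) :
    ∀ a x b : G,
      ρop a * Mop (QuotientGroup.mk x) * ρop b =
        ∑ᶠ p : (G ⧸ H) × (G ⧸ H),
          if Quotient.out p.1 ∈ dcos H a⁻¹ ∧ Quotient.out p.2 ∈ dcos H b then
            Mop (QuotientGroup.mk (x * Quotient.out p.1)) *
              ρop ((Quotient.out p.1)⁻¹ * Quotient.out p.2) *
              Mop (QuotientGroup.mk (x * Quotient.out p.2))
          else 0 := by
  intro a x b
  rw [finsum_ite_eq_finsetSum (s := (hHecke a⁻¹).toFinset ×ˢ (hHecke b).toFinset)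
    fun p => by simp only [Finset.mem_product, Set.Finite.mem_toFinset, out_mem_dcos_iff]]
  refine lp.continuousLinearMap_ext_single (by norm_num) fun d => ?_
  rw [rho_mul_mul_rho_apply_single hHecke hM hρ, sum_apply, Finset.sum_product_right]
  simp only [covariance_term_apply_single hHecke hM hρ, Finset.sum_ite_irrel,
    Finset.sum_const_zero, ← inv_smul_eq_iff, Finset.sum_ite_eq, Set.Finite.mem_toFinset]
end
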